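/- arXiv:2007.14785 — 2 statements merged into one kernel-verified Lean document; each statement's English description precedes it below -/
import Mathlib

section
/- Let p be prime and ξ ∈ ℚ_p transcendental. For every positive integer k, (k+1)·(1 + λ_{k+1}(ξ)) ≥ k·(1 + λ_k(ξ)). -/
open scoped ENNReal

def SimAt (p : ℕ) [Fact p.Prime] (n : ℕ) (ξ : ℚ_[p]) (lam X : ℝ) : Prop :=
  ∃ x : ℕ → ℤ, (∀ i ≤ n, (|x i| : ℝ) ≤ X) ∧
    (∃ m, 1 ≤ m ∧ m ≤ n ∧ (x 0 : ℚ_[p]) * ξ ^ m ≠ (x m : ℚ_[p])) ∧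
    (∀ m, 1 ≤ m → m ≤ n → ‖(x 0 : ℚ_[p]) * ξ ^ m - (x m : ℚ_[p])‖ ≤ X ^ (-lam - 1))

/-- The exponent `λ_n(ξ)` of simultaneous rational approximation. -/
noncomputable def lambdaExp (p : ℕ) [Fact p.Prime] (n : ℕ) (ξ : ℚ_[p]) : ℝ≥0∞ :=
  sSup {l : ℝ≥0∞ | ∃ lam : ℝ, l = ENNReal.ofReal lam ∧ ∀ X₀ : ℝ, ∃ X, X₀ ≤ X ∧ SimAt p n ξ lam X}

/-!
Take an approximation `x = (x₀, …, x_k)` of `(1, ξ, …, ξ^k)` of height `X` and quality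
`X^(-λ-1)`. Siegel's lemma gives an integer relation `∑ t_j x_j = 0` with `|t_j| ≪ X^(1/k)`; let
`r` be the last index with `t_r ≠ 0`. The vector `(t_r x₀, …, t_r x_k, -∑_{j<r} t_j x_{j+k+1-r})`
has height `≪ X^((k+1)/k)`, and thanks to the relation its last error is a combination of the
old errors `x₀ ξ^m - x_m` with coefficients of `p`-adic norm at most `1` (times a power of `ξ`),
so the ultrametric inequality keeps it `≪ X^(-λ-1)`. It is nontrivial because `ξ` is
transcendental and `x₀ ≠ 0` (forced once `λ > 0`). In terms of the new height
`X' ≍ X^((k+1)/k)` the error is `≪ X'^(-k(1+λ)/(k+1))`.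
-/

open Finset Filter IsUltrametricDist

lemma Padic.inv_abs_le_norm_intCast {p : ℕ} [Fact p.Prime] {n : ℤ} (hn : n ≠ 0) :
    (|n| : ℝ)⁻¹ ≤ ‖(n : ℚ_[p])‖ := by
  rw [Padic.norm_eq_zpow_neg_valuation (Int.cast_ne_zero.mpr hn), Padic.valuation_intCast,
    zpow_neg, zpow_natCast]
  have hdvd : (p : ℤ) ^ padicValInt p n ≤ |n| :=
    Int.le_of_dvd (abs_pos.2 hn) ((dvd_abs _ _).2 (padicValInt_dvd n))
  exact inv_anti₀ (pow_pos (mod_cast (Fact.out : p.Prime).pos) _) (mod_cast hdvd)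

lemma Transcendental.intCast_mul_ne_intCast {K : Type*} [Field K] [CharZero K] {ξ : K}
    (hξ : Transcendental ℚ ξ) {a : ℤ} (ha : a ≠ 0) (b : ℤ) : (a : K) * ξ ≠ b := by
  intro h
  apply hξ
  have hξ_eq : ξ = algebraMap ℚ K (b / a) := by
    rw [map_div₀, map_intCast, map_intCast, ← h, mul_div_cancel_left₀ _ (by exact_mod_cast ha)]
  rw [hξ_eq]
  exact isAlgebraic_algebraMap _

lemma exists_last_ne_zero_sum_range_eq {R : Type*} [Semiring R] (t x : ℕ → R) {k : ℕ}
    (ht : ∃ j ≤ k, t j ≠ 0) :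
    ∃ r ≤ k, t r ≠ 0 ∧ ∑ j ∈ range (r + 1), t j * x j = ∑ j ∈ range (k + 1), t j * x j := by
  classical
  obtain ⟨j, hjk, hj⟩ := ht
  set r := Nat.findGreatest (fun j => t j ≠ 0) k
  have hrk : r ≤ k := Nat.findGreatest_le k
  refine ⟨r, hrk, Nat.findGreatest_spec (P := fun j => t j ≠ 0) hjk hj,
    sum_subset (range_subset_range.2 (by omega)) fun i hi hir => ?_⟩
  rw [mem_range] at hi hir
  have hti : ¬t i ≠ 0 :=
    Nat.findGreatest_is_greatest (P := fun j => t j ≠ 0) (n := k) (by omega) (by omega)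
  rw [not_not.1 hti, zero_mul]

lemma shifted_relation_identity {R : Type*} [CommRing R] (a ξ : R) (t x : ℕ → R) (r s : ℕ)
    (h : ∑ j ∈ range (r + 1), t j * x j = 0) :
    t r * a * ξ ^ (r + s) + ∑ j ∈ range r, t j * x (j + s) =
      ξ ^ s * ∑ j ∈ range (r + 1), t j * (a * ξ ^ j - x j) -
        ∑ j ∈ range r, t j * (a * ξ ^ (j + s) - x (j + s)) := by
  have hshift :
      ξ ^ s * ∑ j ∈ range r, t j * (a * ξ ^ j) = ∑ j ∈ range r, t j * (a * ξ ^ (j + s)) := by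
    rw [mul_sum]
    exact sum_congr rfl fun j _ => by ring
  simp only [mul_sub, sum_sub_distrib, h, sub_zero]
  rw [sum_range_succ, mul_add, hshift]
  ring

section Siegel

attribute [local instance] Matrix.seminormedAddCommGroup

lemma exists_int_relation_abs_le {k : ℕ} (hk : 1 ≤ k) {X : ℝ} (hX : 1 ≤ X) (x : ℕ → ℤ)
    (hx : ∀ i ≤ k, (|x i| : ℝ) ≤ X) :
    ∃ t : ℕ → ℤ, (∃ j ≤ k, t j ≠ 0) ∧ ∑ j ∈ range (k + 1), t j * x j = 0 ∧
      ∀ j, (|t j| : ℝ) ≤ (k + 1) * X ^ (1 / k : ℝ) := by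
  set A : Matrix (Fin 1) (Fin (k + 1)) ℤ := Matrix.of fun _ j => x j
  obtain ⟨t, ht0, hrel, hnorm⟩ := Int.Matrix.exists_ne_zero_int_vec_norm_le A (by simp; omega)
    (by simp)
  have hA : max 1 ‖A‖ ≤ X :=
    max_le hX <| (Matrix.norm_le_iff (by linarith)).2 fun _ j => by
      simpa [A, Int.norm_eq_abs] using hx j (by omega)
  have hbound (j : Fin (k + 1)) : (|t j| : ℝ) ≤ (k + 1) * X ^ (1 / k : ℝ) :=
    calc (|t j| : ℝ) = ‖t j‖ := (Int.norm_eq_abs _).symm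
      _ ≤ ‖t‖ := norm_le_pi_norm t j
      _ ≤ ((k + 1) * max 1 ‖A‖) ^ (1 / k : ℝ) := by
        convert hnorm using 3 <;> simp
      _ ≤ ((k + 1) * X) ^ (1 / k : ℝ) := by gcongr
      _ = (k + 1) ^ (1 / k : ℝ) * X ^ (1 / k : ℝ) := Real.mul_rpow (by positivity) (by linarith)
      _ ≤ (k + 1) * X ^ (1 / k : ℝ) := by
        gcongr
        refine Real.rpow_le_self_of_one_le (by linarith) ?_
        rw [div_le_one (by positivity)]
        exact_mod_cast hk
  set t' : ℕ → ℤ := fun j => if h : j < k + 1 then t ⟨j, h⟩ else 0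
  have ht' (j : Fin (k + 1)) : t' j = t j := dif_pos j.isLt
  refine ⟨t', ?_, ?_, fun j => ?_⟩
  · obtain ⟨j, hj⟩ := Function.ne_iff.1 ht0
    exact ⟨j, by omega, by simpa [ht'] using hj⟩
  · rw [← Fin.sum_univ_eq_sum_range (fun j => t' j * x j)]
    simpa [A, Matrix.mulVec, dotProduct, mul_comm, ht'] using congrFun hrel 0
  · simp only [t']
    split_ifs
    · exact hbound _
    · simp only [abs_zero, Int.cast_zero]
      positivity

end Siegel

lemma SimAt.exists_ne_zero {p : ℕ} [Fact p.Prime] {n : ℕ} {ξ : ℚ_[p]} {lam X : ℝ}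
    (hlam : 0 < lam) (hX : 1 < X) (h : SimAt p n ξ lam X) :
    ∃ x : ℕ → ℤ, (∀ i ≤ n, (|x i| : ℝ) ≤ X) ∧ x 0 ≠ 0 ∧
      ∀ m, 1 ≤ m → m ≤ n → ‖(x 0 : ℚ_[p]) * ξ ^ m - (x m : ℚ_[p])‖ ≤ X ^ (-lam - 1) := by
  obtain ⟨x, hx, ⟨m, hm1, hmn, hne⟩, happ⟩ := h
  refine ⟨x, hx, fun h0 => ?_, happ⟩
  have hxm : x m ≠ 0 := by
    rintro hxm
    simp [h0, hxm] at hne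
  have hsmall : ‖(x m : ℚ_[p])‖ ≤ X ^ (-lam - 1) := by
    simpa [h0] using happ m hm1 hmn
  have hlt : X ^ (-lam - 1) < X⁻¹ := by
    rw [← Real.rpow_neg_one]
    exact Real.rpow_lt_rpow_of_exponent_lt hX (by linarith)
  have hge : X⁻¹ ≤ (|x m| : ℝ)⁻¹ :=
    inv_anti₀ (by simpa using hxm) (hx m hmn)
  linarith [Padic.inv_abs_le_norm_intCast (p := p) hxm]

lemma exists_approx_succ {p : ℕ} [Fact p.Prime] {ξ : ℚ_[p]} (hξ : Transcendental ℚ ξ) {k : ℕ}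
    (hk : 1 ≤ k) {X E : ℝ} (hX : 1 ≤ X) (x : ℕ → ℤ) (hx : ∀ i ≤ k, (|x i| : ℝ) ≤ X)
    (hx0 : x 0 ≠ 0) (he : ∀ m, 1 ≤ m → m ≤ k → ‖(x 0 : ℚ_[p]) * ξ ^ m - (x m : ℚ_[p])‖ ≤ E) :
    ∃ y : ℕ → ℤ, (∀ i ≤ k + 1, (|y i| : ℝ) ≤ k * ((k + 1) * X ^ (1 / k : ℝ) * X)) ∧
      (y 0 : ℚ_[p]) * ξ ≠ y 1 ∧
      ∀ m, 1 ≤ m → m ≤ k + 1 →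
        ‖(y 0 : ℚ_[p]) * ξ ^ m - (y m : ℚ_[p])‖ ≤ max 1 ‖ξ‖ ^ (k + 1) * E := by
  obtain ⟨t, ht, hrel, htB⟩ := exists_int_relation_abs_le hk hX x hx
  obtain ⟨r, hrk, htr, hsum⟩ := exists_last_ne_zero_sum_range_eq t x ht
  rw [hrel] at hsum
  set B : ℝ := (k + 1) * X ^ (1 / k : ℝ)
  set s := k + 1 - r
  set e : ℕ → ℚ_[p] := fun m => (x 0 : ℚ_[p]) * ξ ^ m - (x m : ℚ_[p])
  have hE : 0 ≤ E := (norm_nonneg _).trans (he 1 le_rfl hk)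
  have he' (m : ℕ) (hm : m ≤ k) : ‖e m‖ ≤ E := by
    rcases Nat.eq_zero_or_pos m with rfl | hm1
    · simpa [e] using hE
    · exact he m hm1 hm
  have htx (j i : ℕ) (hi : i ≤ k) : |(t j : ℝ) * x i| ≤ B * X := by
    rw [abs_mul]
    exact mul_le_mul (htB j) (hx i hi) (abs_nonneg _) (by positivity)
  set y : ℕ → ℤ := fun m => if m ≤ k then t r * x m else -∑ j ∈ range r, t j * x (j + s)
  have hy (m : ℕ) (hm : m ≤ k) : y m = t r * x m := if_pos hm
  have hytop : y (k + 1) = -∑ j ∈ range r, t j * x (j + s) := if_neg (by omega)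
  have hterm (j m : ℕ) (hm : m ≤ k) : ‖(t j : ℚ_[p]) * e m‖ ≤ E := by
    rw [norm_mul]
    exact (mul_le_of_le_one_left (norm_nonneg _) (Padic.norm_int_le_one _)).trans (he' m hm)
  have hC : 1 ≤ max 1 ‖ξ‖ ^ (k + 1) := one_le_pow₀ (le_max_left _ _)
  refine ⟨y, fun i hi => ?_, ?_, fun m hm1 hm => ?_⟩
  · rcases Nat.lt_or_ge k i with hki | hik
    · obtain rfl : i = k + 1 := by omega
      rw [hytop]
      push_cast
      rw [abs_neg]
      calc |∑ j ∈ range r, (t j : ℝ) * x (j + s)|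
          ≤ ∑ j ∈ range r, |(t j : ℝ) * x (j + s)| := abs_sum_le_sum_abs _ _
        _ ≤ ∑ j ∈ range r, B * X := sum_le_sum fun j hj => htx j _ (by simp at hj; omega)
        _ ≤ k * (B * X) := by
          rw [sum_const, card_range, nsmul_eq_mul]
          gcongr
    · rw [hy i hik]
      push_cast
      exact (htx r i hik).trans (le_mul_of_one_le_left (by positivity) (by exact_mod_cast hk))
  · rw [hy 0 (by omega), hy 1 hk]
    exact hξ.intCast_mul_ne_intCast (mul_ne_zero htr hx0) _
  · rcases Nat.lt_or_ge k m with hkm | hmk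
    · obtain rfl : m = k + 1 := by omega
      have hrel' : ∑ j ∈ range (r + 1), (t j : ℚ_[p]) * x j = 0 := by exact_mod_cast hsum
      have hid := shifted_relation_identity (x 0 : ℚ_[p]) ξ (fun j => t j) (fun j => x j) r s hrel'
      rw [show r + s = k + 1 by omega] at hid
      rw [hy 0 (by omega), hytop]
      push_cast
      rw [sub_neg_eq_add, hid, sub_eq_add_neg]
      have hS : ‖∑ j ∈ range (r + 1), (t j : ℚ_[p]) * e j‖ ≤ E :=
        norm_sum_le_of_forall_le_of_nonneg hE fun j hj => hterm j j (by simp at hj; omega)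
      have hS' : ‖∑ j ∈ range r, (t j : ℚ_[p]) * e (j + s)‖ ≤ E :=
        norm_sum_le_of_forall_le_of_nonneg hE fun j hj => hterm j (j + s) (by simp at hj; omega)
      have hξs : ‖ξ ^ s‖ ≤ max 1 ‖ξ‖ ^ (k + 1) := by
        rw [norm_pow]
        exact (pow_le_pow_left₀ (norm_nonneg _) (le_max_right _ _) s).trans
          (pow_le_pow_right₀ (le_max_left _ _) (by omega))
      refine (norm_add_le_max _ _).trans (max_le ?_ ?_)
      · rw [norm_mul]
        exact mul_le_mul hξs hS (norm_nonneg _) (by positivity)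
      · rw [norm_neg]
        exact hS'.trans (le_mul_of_one_le_left hE hC)
    · rw [hy 0 (by omega), hy m hmk]
      push_cast
      rw [show (t r : ℚ_[p]) * x 0 * ξ ^ m - t r * x m = t r * e m by ring]
      exact (hterm r m hmk).trans (le_mul_of_one_le_left hE hC)

lemma eventually_mul_rpow_le_mul_rpow_rpow {C c q lam μ : ℝ} (hc : 0 < c)
    (h : q * (μ + 1) < lam + 1) :
    ∀ᶠ X in atTop, C * X ^ (-lam - 1) ≤ (c * X ^ q) ^ (-μ - 1) := by
  set δ := lam + 1 - q * (μ + 1)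
  have hδ : 0 < δ := by simp only [δ]; linarith
  filter_upwards [(tendsto_rpow_atTop hδ).eventually_ge_atTop (C * c ^ (μ + 1)),
    eventually_gt_atTop 0] with X hXδ hX
  have hsplit : X ^ (-lam - 1) = X ^ (q * (-μ - 1)) * (X ^ δ)⁻¹ := by
    rw [← Real.rpow_neg hX.le, ← Real.rpow_add hX]
    congr 1
    ring
  have hcμ : c ^ (-μ - 1) = (c ^ (μ + 1))⁻¹ := by
    rw [← Real.rpow_neg hc.le]
    ring_nf
  rw [Real.mul_rpow hc.le (by positivity), ← Real.rpow_mul hX.le, hsplit, hcμ,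
    show C * (X ^ (q * (-μ - 1)) * (X ^ δ)⁻¹) = C / X ^ δ * X ^ (q * (-μ - 1)) by ring]
  refine mul_le_mul_of_nonneg_right ?_ (by positivity)
  rw [div_le_iff₀ (by positivity), inv_mul_eq_div, le_div_iff₀ (by positivity)]
  linarith

lemma frequently_simAt_succ {p : ℕ} [Fact p.Prime] {ξ : ℚ_[p]} (hξ : Transcendental ℚ ξ)
    {k : ℕ} (hk : 1 ≤ k) {lam μ : ℝ} (hlam : 0 < lam) (hμ : (k + 1) * (1 + μ) < k * (1 + lam))
    (h : ∃ᶠ X in atTop, SimAt p k ξ lam X) : ∃ᶠ Y in atTop, SimAt p (k + 1) ξ μ Y := by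
  have hk0 : (0 : ℝ) < k := by exact_mod_cast hk
  set q : ℝ := 1 / k + 1
  have hq : q * (μ + 1) < lam + 1 := by
    rw [show q * (μ + 1) = (k + 1) * (1 + μ) / k by simp only [q]; field_simp; ring,
      div_lt_iff₀ hk0]
    linarith
  set c : ℝ := k * (k + 1)
  have hc : 0 < c := by positivity
  rw [frequently_atTop]
  intro Y₀
  have hlarge : ∀ᶠ X in atTop, 1 < X ∧ Y₀ ≤ c * X ^ q ∧
      max 1 ‖ξ‖ ^ (k + 1) * X ^ (-lam - 1) ≤ (c * X ^ q) ^ (-μ - 1) :=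
    (eventually_gt_atTop 1).and <|
      (((tendsto_rpow_atTop (by positivity)).const_mul_atTop hc).eventually_ge_atTop Y₀).and
        (eventually_mul_rpow_le_mul_rpow_rpow hc hq)
  obtain ⟨X, hSim, hX, hYX, herr⟩ := (h.and_eventually hlarge).exists
  obtain ⟨x, hx, hx0, happ⟩ := hSim.exists_ne_zero hlam hX
  obtain ⟨y, hy, hne, hyapp⟩ := exists_approx_succ hξ hk hX.le x hx hx0 happ
  have hsize : (k : ℝ) * ((k + 1) * X ^ (1 / k : ℝ) * X) = c * X ^ q := by
    rw [Real.rpow_add_one (by positivity)]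
    ring
  exact ⟨_, hYX, y, fun i hi => (hy i hi).trans_eq hsize,
    ⟨1, le_rfl, by omega, by simpa using hne⟩, fun m hm1 hm => (hyapp m hm1 hm).trans herr⟩

lemma ofReal_le_lambdaExp {p : ℕ} [Fact p.Prime] {n : ℕ} {ξ : ℚ_[p]} {lam : ℝ}
    (h : ∃ᶠ X in atTop, SimAt p n ξ lam X) : ENNReal.ofReal lam ≤ lambdaExp p n ξ :=
  le_sSup ⟨lam, rfl, frequently_atTop.1 h⟩

lemma ENNReal.natCast_mul_one_add_ofReal (n : ℕ) {a : ℝ} (ha : 0 ≤ a) :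
    (n : ℝ≥0∞) * (1 + ENNReal.ofReal a) = ENNReal.ofReal (n * (1 + a)) := by
  rw [ENNReal.ofReal_mul (by positivity), ENNReal.ofReal_add zero_le_one ha, ENNReal.ofReal_one,
    ENNReal.ofReal_natCast]

lemma ENNReal.mul_one_add_sSup_le {a b : ℝ≥0∞} {S : Set ℝ≥0∞} (hab : a ≤ b)
    (h : ∀ l ∈ S, a * (1 + l) ≤ b) : a * (1 + sSup S) ≤ b := by
  rcases S.eq_empty_or_nonempty with rfl | hS
  · simpa using hab
  · have := hS.to_subtype
    rw [sSup_eq_iSup', ENNReal.add_iSup, ENNReal.mul_iSup]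
    exact iSup_le fun l => h l l.2

lemma natCast_mul_one_add_ofReal_le_lambdaExp_succ {p : ℕ} [Fact p.Prime] {ξ : ℚ_[p]}
    (hξ : Transcendental ℚ ξ) {k : ℕ} (hk : 1 ≤ k) {lam : ℝ}
    (h : ∃ᶠ X in atTop, SimAt p k ξ lam X) :
    (k : ℝ≥0∞) * (1 + ENNReal.ofReal lam) ≤ (k + 1) * (1 + lambdaExp p (k + 1) ξ) := by
  have hk0 : (0 : ℝ) < k := by exact_mod_cast hk
  have hcast : ((k + 1 : ℕ) : ℝ≥0∞) = k + 1 := by push_cast; rfl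
  rcases le_or_gt lam (1 / k) with hlam | hlam
  · calc (k : ℝ≥0∞) * (1 + ENNReal.ofReal lam) ≤ k * (1 + ENNReal.ofReal (1 / k)) := by gcongr
      _ = k + 1 := by
        rw [ENNReal.natCast_mul_one_add_ofReal k (by positivity),
          show (k : ℝ) * (1 + 1 / k) = (k + 1 : ℕ) by field_simp; push_cast; ring,
          ENNReal.ofReal_natCast, hcast]
      _ ≤ (k + 1) * (1 + lambdaExp p (k + 1) ξ) := le_mul_of_one_le_right' le_self_add
  · have hlam0 : 0 < lam := (by positivity : (0 : ℝ) < 1 / k).trans hlam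
    set μ₀ : ℝ := k * (1 + lam) / (k + 1) - 1
    have hμ₀ : (k + 1) * (1 + μ₀) = k * (1 + lam) := by simp only [μ₀]; field_simp; ring
    have hμ₀0 : 0 ≤ μ₀ := by nlinarith [(div_lt_iff₀ hk0).1 hlam]
    have hμ₀L : ENNReal.ofReal μ₀ ≤ lambdaExp p (k + 1) ξ := by
      refine le_of_forall_lt_imp_le_of_dense fun c hc => ?_
      have hcμ := (ENNReal.lt_ofReal_iff_toReal_lt hc.ne_top).1 hc
      rw [← ENNReal.ofReal_toReal hc.ne_top]
      exact ofReal_le_lambdaExp (frequently_simAt_succ hξ hk hlam0 (by nlinarith) h)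
    calc (k : ℝ≥0∞) * (1 + ENNReal.ofReal lam) = (k + 1 : ℕ) * (1 + ENNReal.ofReal μ₀) := by
          rw [ENNReal.natCast_mul_one_add_ofReal k hlam0.le,
            ENNReal.natCast_mul_one_add_ofReal (k + 1) hμ₀0]
          push_cast
          rw [hμ₀]
      _ ≤ (k + 1) * (1 + lambdaExp p (k + 1) ξ) := by
        rw [hcast]
        gcongr

/-- `(k+1)(1 + λ_{k+1}(ξ)) ≥ k(1 + λ_k(ξ))` for transcendental `ξ`. -/
theorem stmt8 (p : ℕ) [Fact p.Prime] (ξ : ℚ_[p]) (hξ : Transcendental ℚ ξ)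
    (k : ℕ) (hk : 1 ≤ k) :
    (k : ℝ≥0∞) * (1 + lambdaExp p k ξ) ≤ (k + 1 : ℝ≥0∞) * (1 + lambdaExp p (k + 1) ξ) := by
  refine ENNReal.mul_one_add_sSup_le
    (le_self_add.trans (le_mul_of_one_le_right' le_self_add)) ?_
  rintro _ ⟨lam, rfl, hlam⟩
  exact natCast_mul_one_add_ofReal_le_lambdaExp_succ hξ hk (frequently_atTop.2 hlam)
end

section
/- Let p be prime, ξ ∈ ℚ_p, and n ≥ 1. Then λ̂_n(ξ) ≤ max{1/n, 1/λ_1(ξ)}. -/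
/-!
Suppose `λ̂_n(ξ) > λ` with `λ n > 1` while `λ_1(ξ) > μ > 1 / λ`. A degree-one approximation at a
large `X` reduces to a primitive pair `(a, b)` of height `q ≤ X` with `q ‖b ξ - a‖ ≤ X ^ (-μ)`, and
transcendence of `ξ` forces `q` to be large. Apply the uniform property at `X' = K (2 q) ^ (1 / λ)`:
each integer `b x_{k+1} - a x_k` has `|·| ‖·‖ < 1`, so it vanishes by the product formula, and
`(x_m)` is a geometric progression of ratio `a / b`; coprimality then gives `q ^ n ≤ X'`, which is
false for large `q` as `n > 1 / λ`. This argument only fails if `q ‖b ξ - a‖ ≳ 1 / X'`, which is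
incompatible with `q ‖b ξ - a‖ ≤ X ^ (-μ)` because `μ > 1 / λ`.
-/

open scoped ENNReal

/-- The uniform exponent `λ̂_n(ξ)`. -/
noncomputable def lambdaHatExp (p : ℕ) [Fact p.Prime] (n : ℕ) (ξ : ℚ_[p]) : ℝ≥0∞ :=
  sSup {l : ℝ≥0∞ | ∃ lam : ℝ, l = ENNReal.ofReal lam ∧ ∃ X₀ : ℝ, ∀ X, X₀ ≤ X → SimAt p n ξ lam X}

open Filter

variable {p : ℕ} [Fact p.Prime]

namespace Padic

theorem one_le_abs_mul_norm_intCast {k : ℤ} (hk : k ≠ 0) : 1 ≤ |(k : ℝ)| * ‖(k : ℚ_[p])‖ := by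
  have hp : (0 : ℝ) < p := by exact_mod_cast (Fact.out : p.Prime).pos
  have hdvd : (p : ℤ) ^ padicValInt p k ≤ |k| :=
    Int.le_of_dvd (abs_pos.2 hk) ((dvd_abs _ _).2 (padicValInt_dvd k))
  rw [norm_eq_zpow_neg_valuation (by exact_mod_cast hk), valuation_intCast, zpow_neg,
    zpow_natCast, ← div_eq_mul_inv, one_le_div (by positivity)]
  exact_mod_cast hdvd

theorem intCast_eq_zero_of_abs_le_of_norm_le {k : ℤ} {B ε : ℝ} (hB : |(k : ℝ)| ≤ B)
    (hε : ‖(k : ℚ_[p])‖ ≤ ε) (h : B * ε < 1) : k = 0 := by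
  by_contra hk
  have := one_le_abs_mul_norm_intCast (p := p) hk
  have := mul_le_mul hB hε (norm_nonneg _) ((abs_nonneg _).trans hB)
  linarith

end Padic

theorem mul_pow_eq_of_mul_succ_eq {M : Type*} [CommMonoid M] {a b : M} {x : ℕ → M} {n : ℕ}
    (h : ∀ k < n, b * x (k + 1) = a * x k) {m : ℕ} (hm : m ≤ n) :
    x m * b ^ m = x 0 * a ^ m := by
  induction m with
  | zero => simp
  | succ k ih =>
    calc x (k + 1) * b ^ (k + 1) = b * x (k + 1) * b ^ k := by rw [pow_succ]; ac_rfl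
      _ = a * (x k * b ^ k) := by rw [h k (by omega), mul_assoc]
      _ = x 0 * a ^ (k + 1) := by rw [ih (by omega), pow_succ]; ac_rfl

theorem pow_abs_le_of_mul_pow_eq {a b x₀ xₙ : ℤ} {n : ℕ} (hab : IsCoprime a b) (hb : b ≠ 0)
    (hx₀ : x₀ ≠ 0) (h : xₙ * b ^ n = x₀ * a ^ n) : |a| ^ n ≤ |xₙ| ∧ |b| ^ n ≤ |x₀| := by
  have hb₀ : |b| ^ n ≤ |x₀| := by
    have hdvd : b ^ n ∣ x₀ := hab.symm.pow.dvd_of_dvd_mul_right ⟨xₙ, by rw [← h, mul_comm]⟩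
    rw [← abs_pow]
    exact Int.le_of_dvd (abs_pos.2 hx₀) ((abs_dvd_abs _ _).2 hdvd)
  refine ⟨le_of_mul_le_mul_right ?_ (pow_pos (abs_pos.2 hb) n), hb₀⟩
  calc |a| ^ n * |b| ^ n ≤ |x₀| * |a| ^ n := by
        rw [mul_comm]; exact mul_le_mul_of_nonneg_right hb₀ (by positivity)
    _ = |xₙ| * |b| ^ n := by rw [← abs_pow, ← abs_pow, ← abs_mul, ← abs_mul, h]

theorem mul_succ_eq_of_norm_le {ξ : ℚ_[p]} {n : ℕ} {a b : ℤ} {x : ℕ → ℤ} {X δ : ℝ}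
    (hx : ∀ i ≤ n, |(x i : ℝ)| ≤ X)
    (happrox : ∀ m ≤ n, ‖(x 0 : ℚ_[p]) * ξ ^ m - x m‖ ≤ δ)
    (hsmall : 2 * max |(a : ℝ)| |(b : ℝ)| * X *
      max ((max 1 ‖ξ‖) ^ (n - 1) * ‖(b : ℚ_[p]) * ξ - a‖) δ < 1) :
    ∀ k < n, b * x (k + 1) = a * x k := by
  intro k hk
  have hnorm_intCast_mul_le : ∀ (z : ℤ) (y : ℚ_[p]), ‖(z : ℚ_[p]) * y‖ ≤ ‖y‖ := fun z y => by
    rw [norm_mul]; exact mul_le_of_le_one_left (norm_nonneg _) (Padic.norm_int_le_one z)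
  rw [← sub_eq_zero]
  refine Padic.intCast_eq_zero_of_abs_le_of_norm_le (p := p) ?_ ?_ hsmall
  · set q := max |(a : ℝ)| |(b : ℝ)|
    have hxk := hx k hk.le
    have hxk' := hx (k + 1) hk
    have ha : |(a : ℝ)| ≤ q := le_max_left _ _
    have hb : |(b : ℝ)| ≤ q := le_max_right _ _
    push_cast
    calc |(b : ℝ) * x (k + 1) - a * x k|
        ≤ |(b : ℝ)| * |(x (k + 1) : ℝ)| + |(a : ℝ)| * |(x k : ℝ)| := by
          rw [← abs_mul, ← abs_mul]; exact abs_sub _ _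
      _ ≤ q * X + q * X := by gcongr
      _ = 2 * q * X := by ring
  · have hξk : ‖ξ ^ k‖ ≤ (max 1 ‖ξ‖) ^ (n - 1) := by
      rw [norm_pow]
      exact (pow_le_pow_left₀ (norm_nonneg _) (le_max_right _ _) k).trans
        (pow_le_pow_right₀ (le_max_left _ _) (by omega))
    have hsplit : ((b * x (k + 1) - a * x k : ℤ) : ℚ_[p]) =
        x 0 * (ξ ^ k * (b * ξ - a)) + a * (x 0 * ξ ^ k - x k) +
          (-b : ℤ) * (x 0 * ξ ^ (k + 1) - x (k + 1)) := by
      push_cast; ring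
    rw [hsplit]
    refine (IsUltrametricDist.norm_add_le_max _ _).trans (max_le
      ((IsUltrametricDist.norm_add_le_max _ _).trans (max_le ?_ ?_)) ?_)
    · refine ((hnorm_intCast_mul_le _ _).trans ?_).trans (le_max_left _ _)
      rw [norm_mul]
      exact mul_le_mul_of_nonneg_right hξk (norm_nonneg _)
    · exact ((hnorm_intCast_mul_le _ _).trans (happrox k hk.le)).trans (le_max_right _ _)
    · exact ((hnorm_intCast_mul_le _ _).trans (happrox (k + 1) hk)).trans (le_max_right _ _)

theorem max_abs_pow_le_of_simAt {ξ : ℚ_[p]} {n : ℕ} {lam X : ℝ} {a b : ℤ} (hab : IsCoprime a b)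
    (hb : b ≠ 0)
    (hsmall : 2 * max |(a : ℝ)| |(b : ℝ)| * X *
      max ((max 1 ‖ξ‖) ^ (n - 1) * ‖(b : ℚ_[p]) * ξ - a‖) (X ^ (-lam - 1)) < 1)
    (hsim : SimAt p n ξ lam X) : max |(a : ℝ)| |(b : ℝ)| ^ n ≤ X := by
  obtain ⟨x, hx, ⟨m, hm, hmn, hne⟩, happrox⟩ := hsim
  have hX : 0 ≤ X := (abs_nonneg _).trans (hx 0 n.zero_le)
  have happrox₀ : ∀ m ≤ n, ‖(x 0 : ℚ_[p]) * ξ ^ m - x m‖ ≤ X ^ (-lam - 1) := by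
    intro m hm
    rcases m.eq_zero_or_pos with rfl | hm₀
    · simpa using Real.rpow_nonneg hX _
    · exact happrox m hm₀ hm
  have hgeom : ∀ m ≤ n, x m * b ^ m = x 0 * a ^ m :=
    fun m => mul_pow_eq_of_mul_succ_eq (mul_succ_eq_of_norm_le hx happrox₀ hsmall)
  have hx₀ : x 0 ≠ 0 := by
    intro h₀
    have hxm : x m = 0 := by simpa [h₀, hb] using hgeom m hmn
    exact hne (by simp [h₀, hxm])
  obtain ⟨han, hb₀⟩ := pow_abs_le_of_mul_pow_eq hab hb hx₀ (hgeom n le_rfl)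
  rcases le_total |(a : ℝ)| |(b : ℝ)| with h | h
  · rw [max_eq_right h]; exact le_trans (by exact_mod_cast hb₀) (hx 0 n.zero_le)
  · rw [max_eq_left h]; exact le_trans (by exact_mod_cast han) (hx n le_rfl)

theorem one_le_max_abs {a b : ℤ} (h : a ≠ 0 ∨ b ≠ 0) : 1 ≤ max |(a : ℝ)| |(b : ℝ)| := by
  rcases h with ha | hb
  · exact le_max_of_le_left (by exact_mod_cast Int.one_le_abs ha)
  · exact le_max_of_le_right (by exact_mod_cast Int.one_le_abs hb)

theorem pos_of_one_lt_mul_natCast {x : ℝ} {n : ℕ} (h : 1 < x * n) : 0 < x := by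
  by_contra! hx
  linarith [mul_nonpos_of_nonpos_of_nonneg hx n.cast_nonneg]

theorem eventually_mul_rpow_lt_pow (B : ℝ) {e : ℝ} {n : ℕ} (he : e < n) :
    ∀ᶠ q : ℝ in atTop, B * q ^ e < q ^ n := by
  filter_upwards [(tendsto_rpow_atTop (sub_pos.2 he)).eventually_gt_atTop B,
    eventually_gt_atTop 0] with q hq hq₀
  calc B * q ^ e < q ^ (n - e) * q ^ e := by gcongr
    _ = q ^ n := by rw [← Real.rpow_add hq₀, sub_add_cancel, Real.rpow_natCast]

theorem intCast_mul_sub_ne_zero {K : Type*} [Field K] [CharZero K] {ξ : K}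
    (hξ : Transcendental ℚ ξ) {a b : ℤ} (hab : a ≠ 0 ∨ b ≠ 0) : (b : K) * ξ - a ≠ 0 := by
  intro h
  rcases eq_or_ne b 0 with rfl | hb
  · simp_all
  · apply hξ
    have : ξ = algebraMap ℚ K ((a : ℚ) / b) := by
      rw [map_div₀, map_intCast, map_intCast, eq_div_iff (by exact_mod_cast hb)]
      linear_combination h
    rw [this]
    exact isAlgebraic_algebraMap _

theorem exists_pos_le_norm_intCast_mul_sub {ξ : ℚ_[p]} (hξ : Transcendental ℚ ξ) (Q : ℝ) :
    ∃ c > 0, ∀ a b : ℤ, (a ≠ 0 ∨ b ≠ 0) → max |(a : ℝ)| |(b : ℝ)| ≤ Q →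
      c ≤ ‖(b : ℚ_[p]) * ξ - a‖ := by
  set N : ℤ := ⌈Q⌉
  set box : Finset (ℤ × ℤ) := (Finset.Icc (-N) N ×ˢ Finset.Icc (-N) N).erase 0
  set f : ℤ × ℤ → ℝ := fun z => ‖(z.2 : ℚ_[p]) * ξ - z.1‖
  refine ⟨(insert 1 (box.image f)).min' (Finset.insert_nonempty _ _), ?_, ?_⟩
  · rw [gt_iff_lt, Finset.lt_min'_iff]
    simp only [Finset.mem_insert, Finset.mem_image, forall_eq_or_imp, forall_exists_index,
      and_imp, forall_apply_eq_imp_iff₂]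
    refine ⟨one_pos, fun z hz => norm_pos_iff.2 (intCast_mul_sub_ne_zero hξ ?_)⟩
    by_contra! h
    exact (Finset.mem_erase.1 hz).1 (Prod.ext h.1 h.2)
  · intro a b hab hQ
    have hN : ∀ z : ℤ, |(z : ℝ)| ≤ Q → z ∈ Finset.Icc (-N) N := fun z hz => by
      rw [Finset.mem_Icc, ← abs_le, ← Int.cast_le (R := ℝ), Int.cast_abs]
      exact hz.trans (Int.le_ceil Q)
    suffices hmem : (a, b) ∈ box from
      Finset.min'_le _ (f (a, b)) (Finset.mem_insert_of_mem (Finset.mem_image_of_mem f hmem))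
    refine Finset.mem_erase.2 ⟨fun h => ?_, Finset.mem_product.2
      ⟨hN a ((le_max_left _ _).trans hQ), hN b ((le_max_right _ _).trans hQ)⟩⟩
    rcases hab with ha | hb
    · exact ha (congrArg Prod.fst h)
    · exact hb (congrArg Prod.snd h)

theorem exists_coprime_of_simAt_one {ξ : ℚ_[p]} {μ X : ℝ} (hX : 0 < X)
    (hsim : SimAt p 1 ξ μ X) :
    ∃ a b : ℤ, IsCoprime a b ∧ (a ≠ 0 ∨ b ≠ 0) ∧ max |(a : ℝ)| |(b : ℝ)| ≤ X ∧
      ‖(b : ℚ_[p]) * ξ - a‖ * max |(a : ℝ)| |(b : ℝ)| ≤ X ^ (-μ) := by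
  obtain ⟨y, hy, ⟨m, hm, hm', hne⟩, happrox⟩ := hsim
  obtain rfl : m = 1 := le_antisymm hm' hm
  have hgcd : 0 < Int.gcd (y 0) (y 1) := by
    rw [Int.gcd_pos_iff]
    by_contra! h
    exact hne (by simp [h.1, h.2])
  obtain ⟨g, b, a, hg, hba, hy₀, hy₁⟩ := Int.exists_gcd_one' hgcd
  refine ⟨a, b, (Int.isCoprime_iff_gcd_eq_one.2 hba).symm, ?_, ?_⟩
  · by_contra! h
    exact hne (by simp [hy₀, hy₁, h.1, h.2])
  have hg₁ : (1 : ℝ) ≤ g := by exact_mod_cast hg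
  have hgq : (g : ℝ) * max |(a : ℝ)| |(b : ℝ)| ≤ X := by
    rw [mul_max_of_nonneg _ _ (by positivity)]
    have h₀ := hy 0 zero_le_one
    have h₁ := hy 1 le_rfl
    rw [hy₀] at h₀
    rw [hy₁] at h₁
    push_cast at h₀ h₁
    rw [abs_mul, Nat.abs_cast, mul_comm] at h₀ h₁
    exact max_le h₁ h₀
  have hs : ‖(b : ℚ_[p]) * ξ - a‖ ≤ g * ‖(y 0 : ℚ_[p]) * ξ - y 1‖ := by
    have hfactor : (y 0 : ℚ_[p]) * ξ - y 1 = ((g : ℤ) : ℚ_[p]) * ((b : ℚ_[p]) * ξ - a) := by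
      rw [hy₀, hy₁]; push_cast; ring
    have := Padic.one_le_abs_mul_norm_intCast (p := p) (k := g) (by exact_mod_cast hg.ne')
    rw [Int.cast_natCast, Nat.abs_cast] at this
    rw [hfactor, norm_mul, ← mul_assoc]
    exact le_mul_of_one_le_left (norm_nonneg _) this
  refine ⟨(le_mul_of_one_le_left (by positivity) hg₁).trans hgq, ?_⟩
  calc ‖(b : ℚ_[p]) * ξ - a‖ * max |(a : ℝ)| |(b : ℝ)|
      ≤ ‖(y 0 : ℚ_[p]) * ξ - y 1‖ * (g * max |(a : ℝ)| |(b : ℝ)|) := by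
        rw [mul_left_comm, ← mul_assoc]; gcongr
    _ ≤ X ^ (-μ - 1) * X :=
        mul_le_mul (by simpa using happrox 1 le_rfl le_rfl) hgq (by positivity)
          (Real.rpow_nonneg hX.le _)
    _ = X ^ (-μ) := by rw [Real.rpow_sub_one hX.ne', div_mul_cancel₀ _ hX.ne']

theorem one_le_mul_norm_intCast_mul_sub_of_uniform {ξ : ℚ_[p]} {n : ℕ} {lam X₀ K : ℝ}
    (hlam : 0 < lam) (hK : 1 < K) (hKX₀ : X₀ ≤ K) (hu : ∀ X, X₀ ≤ X → SimAt p n ξ lam X)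
    {a b : ℤ} (hab : IsCoprime a b) (hb : b ≠ 0)
    (hq : K * (2 * max |(a : ℝ)| |(b : ℝ)|) ^ (1 / lam) < max |(a : ℝ)| |(b : ℝ)| ^ n) :
    1 ≤ 2 * (max 1 ‖ξ‖) ^ (n - 1) * (K * (2 * max |(a : ℝ)| |(b : ℝ)|) ^ (1 / lam)) *
      (‖(b : ℚ_[p]) * ξ - a‖ * max |(a : ℝ)| |(b : ℝ)|) := by
  set q := max |(a : ℝ)| |(b : ℝ)|
  set X := K * (2 * q) ^ (1 / lam)
  have hq₁ : 1 ≤ q := one_le_max_abs (Or.inr hb)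
  have hX : 0 < X := by positivity
  have hXK : X₀ ≤ X := hKX₀.trans <|
    le_mul_of_one_le_right (by linarith) (Real.one_le_rpow (by linarith) (by positivity))
  have hXlam : X ^ lam = K ^ lam * (2 * q) := by
    rw [Real.mul_rpow (by linarith) (by positivity), ← Real.rpow_mul (by positivity),
      one_div_mul_cancel hlam.ne', Real.rpow_one]
  have hδ : 2 * q * X * X ^ (-lam - 1) < 1 := by
    have hKlam : 1 < K ^ lam := Real.one_lt_rpow hK hlam
    rw [Real.rpow_sub_one hX.ne', Real.rpow_neg hX.le, hXlam, mul_assoc,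
      mul_div_cancel₀ _ hX.ne', mul_inv, mul_left_comm, mul_inv_cancel₀ (by positivity), mul_one]
    exact inv_lt_one_of_one_lt₀ hKlam
  by_contra! hs
  refine (max_abs_pow_le_of_simAt hab hb ?_ (hu X hXK)).not_gt hq
  rw [mul_max_of_nonneg _ _ (by positivity)]
  exact max_lt (by linarith) hδ

theorem exists_one_le_mul_norm_intCast_mul_sub_of_uniform {ξ : ℚ_[p]} {n : ℕ} {lam : ℝ}
    (hlam : 0 < lam) (hn : 1 < lam * n) (hu : ∃ X₀, ∀ X, X₀ ≤ X → SimAt p n ξ lam X) :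
    ∃ B > 0, ∃ Q : ℝ, ∀ a b : ℤ, IsCoprime a b → b ≠ 0 → Q ≤ max |(a : ℝ)| |(b : ℝ)| →
      1 ≤ B * (2 * max |(a : ℝ)| |(b : ℝ)|) ^ (1 / lam) *
        (‖(b : ℚ_[p]) * ξ - a‖ * max |(a : ℝ)| |(b : ℝ)|) := by
  obtain ⟨X₀, hu⟩ := hu
  set K := max X₀ 1 + 1
  have hK : 1 < K := by linarith [le_max_right X₀ 1]
  have hKX₀ : X₀ ≤ K := by linarith [le_max_left X₀ 1]
  have hn' : 1 / lam < n := by rw [div_lt_iff₀ hlam]; linarith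
  obtain ⟨Q, hQ⟩ : ∃ Q, ∀ q ≥ Q, K * (2 * q) ^ (1 / lam) < q ^ n := by
    refine Filter.eventually_atTop.1 ?_
    filter_upwards [eventually_mul_rpow_lt_pow (K * 2 ^ (1 / lam)) hn', eventually_gt_atTop 0]
      with q hq hq₀
    rwa [Real.mul_rpow zero_le_two hq₀.le, ← mul_assoc]
  refine ⟨2 * (max 1 ‖ξ‖) ^ (n - 1) * K, by positivity, Q, fun a b hab hb hQq => ?_⟩
  rw [mul_assoc _ K]
  exact one_le_mul_norm_intCast_mul_sub_of_uniform hlam hK hKX₀ hu hab hb (hQ _ hQq)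

theorem mul_le_one_of_uniform_of_ordinary {ξ : ℚ_[p]} (hξ : Transcendental ℚ ξ) {n : ℕ}
    {lam μ : ℝ} (hn : 1 < lam * n) (hu : ∃ X₀, ∀ X, X₀ ≤ X → SimAt p n ξ lam X)
    (happ : ∀ X₀, ∃ X, X₀ ≤ X ∧ SimAt p 1 ξ μ X) : μ * lam ≤ 1 := by
  by_contra! hμ
  have hlam : 0 < lam := pos_of_one_lt_mul_natCast hn
  have hμ' : 0 < μ - 1 / lam := by rw [sub_pos, div_lt_iff₀ hlam]; linarith
  have hμ₀ : 0 < μ := by linarith [one_div_pos.2 hlam]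
  obtain ⟨B, hB, Q, hBQ⟩ := exists_one_le_mul_norm_intCast_mul_sub_of_uniform hlam hn hu
  obtain ⟨c, hc, hcQ⟩ := exists_pos_le_norm_intCast_mul_sub hξ (max Q 1)
  obtain ⟨X₁, hX₁⟩ : ∃ X₁, ∀ X ≥ X₁, 0 < X ∧ X ^ (-μ) < c ∧
      B * 2 ^ (1 / lam) * X ^ (-(μ - 1 / lam)) < 1 := by
    refine Filter.eventually_atTop.1 ((eventually_gt_atTop 0).and
      (((tendsto_rpow_neg_atTop hμ₀).eventually (gt_mem_nhds hc)).and ?_))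
    have := (tendsto_rpow_neg_atTop hμ').const_mul (B * 2 ^ (1 / lam))
    rw [mul_zero] at this
    exact this.eventually (gt_mem_nhds one_pos)
  obtain ⟨X, hXX₁, hsim⟩ := happ X₁
  obtain ⟨hX, hXc, hXB⟩ := hX₁ X hXX₁
  obtain ⟨a, b, hab, hab₀, hqX, hsq⟩ := exists_coprime_of_simAt_one hX hsim
  set q := max |(a : ℝ)| |(b : ℝ)|
  have hqQ : max Q 1 < q := by
    by_contra! h
    linarith [hcQ a b hab₀ h,
      le_mul_of_one_le_right (norm_nonneg ((b : ℚ_[p]) * ξ - a)) (one_le_max_abs hab₀)]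
  have hb : b ≠ 0 := by
    rintro rfl
    have ha : |a| = 1 := Int.isUnit_iff_abs_eq.1 (isCoprime_zero_right.1 hab)
    have : q = 1 := by simp [q, ← Int.cast_abs, ha]
    linarith [le_max_right Q 1]
  have hq₀ : 0 < q := by linarith [le_max_right Q 1]
  refine lt_irrefl (1 : ℝ) ?_
  calc 1 ≤ B * (2 * q) ^ (1 / lam) * (‖(b : ℚ_[p]) * ξ - a‖ * q) :=
        hBQ a b hab hb ((le_max_left Q 1).trans hqQ.le)
    _ ≤ B * (2 * X) ^ (1 / lam) * X ^ (-μ) := by gcongr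
    _ = B * 2 ^ (1 / lam) * X ^ (-(μ - 1 / lam)) := by
      rw [Real.mul_rpow zero_le_two hX.le, neg_sub, sub_eq_add_neg, Real.rpow_add hX]; ring
    _ < 1 := hXB

theorem stmt11_general (p : ℕ) [Fact p.Prime] (ξ : ℚ_[p]) (hξ : Transcendental ℚ ξ)
    (n : ℕ) :
    lambdaHatExp p n ξ ≤ max (1 / (n : ℝ≥0∞)) (1 / lambdaExp p 1 ξ) := by
  refine sSup_le ?_
  rintro _ ⟨lam, rfl, hu⟩
  rcases le_or_gt (lam * n) 1 with hn | hn
  · refine le_max_of_le_left ?_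
    rw [one_div, ENNReal.le_inv_iff_mul_le, ← ENNReal.ofReal_natCast,
      ← ENNReal.ofReal_mul' n.cast_nonneg]
    exact ENNReal.ofReal_le_one.2 hn
  · refine le_max_of_le_right ?_
    have hlam : 0 ≤ lam := (pos_of_one_lt_mul_natCast hn).le
    rw [one_div, ENNReal.le_inv_iff_le_inv]
    refine sSup_le ?_
    rintro _ ⟨μ, rfl, happ⟩
    rw [ENNReal.le_inv_iff_mul_le, ← ENNReal.ofReal_mul' hlam]
    exact ENNReal.ofReal_le_one.2 (mul_le_one_of_uniform_of_ordinary hξ hn hu happ)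

/-- `λ̂_n(ξ) ≤ max{1/n, 1/λ_1(ξ)}` (with `1/∞ = 0`). -/
theorem stmt11 (p : ℕ) [Fact p.Prime] (ξ : ℚ_[p]) (hξ : Transcendental ℚ ξ)
    (n : ℕ) (hn : 1 ≤ n) :
    lambdaHatExp p n ξ ≤ max (1 / (n : ℝ≥0∞)) (1 / lambdaExp p 1 ξ) :=
  stmt11_general p ξ hξ n
end
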